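/- Fix a matrix A with ‖(AᴴA+I)^{-1}‖₂ = α, a map D : ℂⁿ → ℂⁿ, and suppose the smoothed denoiser G(x) = E_{η∼N(0,σ²I)}[D(x+η)] is L-Lipschitz with L = Mα/(√(2π)σ) < 1 after composition with (AᴴA+I)^{-1}, where M = 2 sup_x ‖D(x)‖. Define the SMUG iteration x^{n+1}(u) = (AᴴA+I)^{-1}(Aᴴy_u + G(x^n(u))) with x^0(u) = Aᴴ y_u for measurements y_u. Then for measurements y and y+δ, ‖x^n(Aᴴy) − x^n(Aᴴ(y+δ))‖ ≤ C_n ‖δ‖ where C_n = α‖A‖₂·(1 − (Mα/(√(2π)σ))^n)/(1 − Mα/(√(2π)σ)) + ‖A‖₂·(Mα/(√(2π)σ))^n. -/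
import Mathlib

open Matrix MeasureTheory

noncomputable instance (n : ℕ) : MeasurableSpace (EuclideanSpace ℂ (Fin n)) := borel _
instance (n : ℕ) : BorelSpace (EuclideanSpace ℂ (Fin n)) := ⟨rfl⟩
noncomputable instance (n : ℕ) : MeasureSpace (EuclideanSpace ℂ (Fin n)) :=
  measureSpaceOfInnerProductSpace

/-- Spectral norm of a complex matrix. -/
noncomputable def specNorm {m n : ℕ} (B : Matrix (Fin m) (Fin n) ℂ) : ℝ :=
  ‖LinearMap.toContinuousLinearMap (Matrix.toEuclideanLin B)‖

/-- Matrix–vector multiplication as a map between Euclidean spaces. -/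
noncomputable def mulVecE {m n : ℕ} (B : Matrix (Fin m) (Fin n) ℂ)
    (x : EuclideanSpace ℂ (Fin n)) : EuclideanSpace ℂ (Fin m) :=
  Matrix.toEuclideanLin B x

/-- Density of the isotropic Gaussian `N(0, σ²I)` on `ℂⁿ ≅ ℝ^{2n}`. -/
noncomputable def gaussDensityC (n : ℕ) (σ : ℝ) (z : EuclideanSpace ℂ (Fin n)) : ℝ :=
  (2 * Real.pi * σ ^ 2) ^ (-(n : ℝ)) * Real.exp (-‖z‖ ^ 2 / (2 * σ ^ 2))

theorem mulVecE_norm_le {m n : ℕ} (B : Matrix (Fin m) (Fin n) ℂ)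
    (v : EuclideanSpace ℂ (Fin n)) : ‖mulVecE B v‖ ≤ specNorm B * ‖v‖ := by
  have := (LinearMap.toContinuousLinearMap (Matrix.toEuclideanLin B)).le_opNorm v
  simpa [mulVecE, specNorm] using this

theorem specNorm_conjTranspose {m n : ℕ} (A : Matrix (Fin m) (Fin n) ℂ) :
    specNorm Aᴴ = specNorm A := by
  unfold specNorm
  rw [Matrix.toEuclideanLin_conjTranspose_eq_adjoint,
    LinearMap.adjoint_toContinuousLinearMap]
  exact ContinuousLinearMap.adjoint.norm_map _

/-- Theorem 1 (SMUG robustness): the iteration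
`x^{k+1}(u) = (AᴴA+I)⁻¹(Aᴴ y_u + G(x^k(u)))`, where `G` is the Gaussian
smoothing of a bounded denoiser `D` and the composed map is an
`Mα/(√(2π)σ) < 1`-Lipschitz contraction, satisfies
`‖x^k(Aᴴy) − x^k(Aᴴ(y+δ))‖ ≤ C_k‖δ‖`. -/
theorem smug_robustness (mdim n : ℕ) (σ M : ℝ) (hσ : 0 < σ)
    (A : Matrix (Fin mdim) (Fin n) ℂ)
    (D : EuclideanSpace ℂ (Fin n) → EuclideanSpace ℂ (Fin n))
    (hbdd : BddAbove (Set.range fun x => ‖D x‖))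
    (hM : M = 2 * ⨆ x, ‖D x‖)
    (G : EuclideanSpace ℂ (Fin n) → EuclideanSpace ℂ (Fin n))
    (hG : ∀ x, G x = ∫ η, gaussDensityC n σ η • D (x + η))
    (α : ℝ) (hα : α = specNorm ((Aᴴ * A + 1)⁻¹))
    (hLip : LipschitzWith (Real.toNNReal (M * α / (Real.sqrt (2 * Real.pi) * σ)))
      (fun x => mulVecE ((Aᴴ * A + 1)⁻¹) (G x)))
    (hr : M * α / (Real.sqrt (2 * Real.pi) * σ) < 1)
    (xseq : EuclideanSpace ℂ (Fin mdim) → ℕ → EuclideanSpace ℂ (Fin n))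
    (h0 : ∀ u, xseq u 0 = mulVecE Aᴴ u)
    (hstep : ∀ u k, xseq u (k + 1) =
      mulVecE ((Aᴴ * A + 1)⁻¹) (mulVecE Aᴴ u + G (xseq u k)))
    (y δ : EuclideanSpace ℂ (Fin mdim)) (k : ℕ) :
    ‖xseq y k - xseq (y + δ) k‖ ≤
      (α * specNorm A *
          ((1 - (M * α / (Real.sqrt (2 * Real.pi) * σ)) ^ k) /
            (1 - M * α / (Real.sqrt (2 * Real.pi) * σ))) +
        specNorm A * (M * α / (Real.sqrt (2 * Real.pi) * σ)) ^ k) * ‖δ‖ := by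
  set r : ℝ := M * α / (Real.sqrt (2 * Real.pi) * σ) with hrdef
  have hM0 : 0 ≤ M := by
    rw [hM]
    have : 0 ≤ ⨆ x, ‖D x‖ := Real.iSup_nonneg fun x => norm_nonneg _
    linarith
  have hα0 : 0 ≤ α := hα ▸ norm_nonneg _
  have hden : 0 < Real.sqrt (2 * Real.pi) * σ := by
    apply mul_pos _ hσ
    exact Real.sqrt_pos.mpr (by positivity)
  have hr0 : 0 ≤ r := by
    apply div_nonneg (mul_nonneg hM0 hα0) hden.le
  have hlip' : ∀ a b : EuclideanSpace ℂ (Fin n),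
      ‖mulVecE ((Aᴴ * A + 1)⁻¹) (G a) - mulVecE ((Aᴴ * A + 1)⁻¹) (G b)‖ ≤ r * ‖a - b‖ := by
    intro a b
    have := hLip.dist_le_mul a b
    rw [Real.coe_toNNReal _ hr0] at this
    simpa [dist_eq_norm] using this
  have hAδ : ‖mulVecE Aᴴ y - mulVecE Aᴴ (y + δ)‖ ≤ specNorm A * ‖δ‖ := by
    have h1 : mulVecE Aᴴ y - mulVecE Aᴴ (y + δ) = mulVecE Aᴴ (y - (y + δ)) :=
      (map_sub (Matrix.toEuclideanLin Aᴴ) _ _).symm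
    rw [h1]
    have := mulVecE_norm_le Aᴴ (y - (y + δ))
    rw [specNorm_conjTranspose] at this
    simpa using this
  induction k with
  | zero =>
      simp only [h0, pow_zero]
      calc ‖mulVecE Aᴴ y - mulVecE Aᴴ (y + δ)‖ ≤ specNorm A * ‖δ‖ := hAδ
        _ ≤ _ := le_of_eq (by rw [sub_self, zero_div]; ring)
  | succ k ih =>
      rw [hstep, hstep]
      set B := (Aᴴ * A + 1)⁻¹ with hB
      have hsplit : mulVecE B (mulVecE Aᴴ y + G (xseq y k)) -
          mulVecE B (mulVecE Aᴴ (y + δ) + G (xseq (y + δ) k)) =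
          mulVecE B (mulVecE Aᴴ y - mulVecE Aᴴ (y + δ)) +
          (mulVecE B (G (xseq y k)) - mulVecE B (G (xseq (y + δ) k))) := by
        simp only [mulVecE, map_add, map_sub]
        abel
      rw [hsplit]
      have t1 : ‖mulVecE B (mulVecE Aᴴ y - mulVecE Aᴴ (y + δ))‖ ≤
          α * (specNorm A * ‖δ‖) := by
        calc ‖mulVecE B (mulVecE Aᴴ y - mulVecE Aᴴ (y + δ))‖ ≤
            specNorm B * ‖mulVecE Aᴴ y - mulVecE Aᴴ (y + δ)‖ := mulVecE_norm_le _ _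
          _ ≤ α * (specNorm A * ‖δ‖) := by
            rw [hα, hB]
            exact mul_le_mul_of_nonneg_left hAδ (norm_nonneg _)
      have t2 : ‖mulVecE B (G (xseq y k)) - mulVecE B (G (xseq (y + δ) k))‖ ≤
          r * ((α * specNorm A * ((1 - r ^ k) / (1 - r)) + specNorm A * r ^ k) * ‖δ‖) := by
        calc ‖mulVecE B (G (xseq y k)) - mulVecE B (G (xseq (y + δ) k))‖ ≤
            r * ‖xseq y k - xseq (y + δ) k‖ := hlip' _ _
          _ ≤ _ := mul_le_mul_of_nonneg_left ih hr0
      calc ‖mulVecE B (mulVecE Aᴴ y - mulVecE Aᴴ (y + δ)) +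
            (mulVecE B (G (xseq y k)) - mulVecE B (G (xseq (y + δ) k)))‖ ≤
          ‖mulVecE B (mulVecE Aᴴ y - mulVecE Aᴴ (y + δ))‖ +
            ‖mulVecE B (G (xseq y k)) - mulVecE B (G (xseq (y + δ) k))‖ := norm_add_le _ _
        _ ≤ α * (specNorm A * ‖δ‖) +
            r * ((α * specNorm A * ((1 - r ^ k) / (1 - r)) + specNorm A * r ^ k) * ‖δ‖) :=
            add_le_add t1 t2
        _ = (α * specNorm A * ((1 - r ^ (k + 1)) / (1 - r)) +
            specNorm A * r ^ (k + 1)) * ‖δ‖ := by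
            have h1r : 1 - r ≠ 0 := by intro h; rw [hrdef] at hr; linarith
            field_simp
            ring
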